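/- arXiv:2407.14419 — 3 statements merged into one kernel-verified Lean document; each statement's English description precedes it below -/
import Mathlib

section
/- The function h(z) = log(1 + ‖z‖²/2) is strictly convex on the open Euclidean ball of radius √2 in ℝ^d. -/
/-! Write the function as `g ‖z‖` with `g r = log (1 + r² / 2)`. The derivative `r / (1 + r² / 2)`
of `g` is strictly increasing on `[0, √2]`, so `g` is strictly convex there, and `g` is strictly
increasing on `[0, ∞)`. Composing with the convex norm gives convexity; for `x ≠ y` the inequality is
strict because of `g` when `‖x‖ ≠ ‖y‖`, and because the Euclidean ball is strictly convex when
`‖x‖ = ‖y‖`. -/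

open Set Real

theorem StrictConvexOn.comp_norm {E : Type*} [NormedAddCommGroup E] [NormedSpace ℝ E]
    [StrictConvexSpace ℝ E] {s : Set E} {t : Set ℝ} {g : ℝ → ℝ} (hs : Convex ℝ s)
    (hst : ∀ z ∈ s, ‖z‖ ∈ t) (hg : StrictConvexOn ℝ t g) (hg_mono : StrictMonoOn g t) :
    StrictConvexOn ℝ s (fun z => g ‖z‖) := by
  refine ⟨hs, fun x hx y hy hxy a b ha hb hab => ?_⟩
  have hcombo : ‖a • x + b • y‖ ∈ t := hst _ (hs hx hy ha.le hb.le hab)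
  rcases eq_or_ne ‖x‖ ‖y‖ with hnorm | hnorm
  · have hlt : ‖a • x + b • y‖ < ‖x‖ := norm_combo_lt_of_ne le_rfl hnorm.ge hxy ha hb hab
    calc g ‖a • x + b • y‖ < g ‖x‖ := hg_mono hcombo (hst x hx) hlt
      _ = a • g ‖x‖ + b • g ‖y‖ := by rw [← hnorm, ← add_smul, hab, one_smul]
  · have hle : ‖a • x + b • y‖ ≤ a • ‖x‖ + b • ‖y‖ := (convexOn_norm hs).2 hx hy ha.le hb.le hab
    calc g ‖a • x + b • y‖ ≤ g (a • ‖x‖ + b • ‖y‖) :=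
          hg_mono.monotoneOn hcombo (hg.1 (hst x hx) (hst y hy) ha.le hb.le hab) hle
      _ < a • g ‖x‖ + b • g ‖y‖ := hg.2 (hst x hx) (hst y hy) hnorm ha hb hab

theorem hasDerivAt_log_one_add_sq_div_two (r : ℝ) :
    HasDerivAt (fun r : ℝ => log (1 + r ^ 2 / 2)) (r / (1 + r ^ 2 / 2)) r := by
  have h := (((hasDerivAt_pow 2 r).div_const 2).const_add 1).log (by positivity)
  convert h using 1
  ring

theorem strictMonoOn_div_one_add_sq_div_two :
    StrictMonoOn (fun r : ℝ => r / (1 + r ^ 2 / 2)) (Icc 0 √2) := by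
  intro r hr s hs hrs
  have hrs2 : r * s < 2 := by
    have := Real.mul_self_sqrt (show (0:ℝ) ≤ 2 by norm_num)
    nlinarith [hr.1, hs.2]
  dsimp only
  -- s (1 + r²/2) - r (1 + s²/2) = (s - r) (1 - r s / 2)
  rw [div_lt_div_iff₀ (by positivity) (by positivity)]
  nlinarith [mul_pos (sub_pos.2 hrs) (sub_pos.2 hrs2)]

theorem strictMonoOn_log_one_add_sq_div_two :
    StrictMonoOn (fun r : ℝ => log (1 + r ^ 2 / 2)) (Ici 0) := by
  intro r hr s _ hrs
  have := pow_lt_pow_left₀ hrs hr two_ne_zero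
  exact log_lt_log (by positivity) (by linarith)

theorem strictConvexOn_log_one_add_sq_div_two :
    StrictConvexOn ℝ (Icc 0 √2) (fun r : ℝ => log (1 + r ^ 2 / 2)) := by
  have hderiv : deriv (fun r : ℝ => log (1 + r ^ 2 / 2)) = fun r => r / (1 + r ^ 2 / 2) :=
    funext fun r => (hasDerivAt_log_one_add_sq_div_two r).deriv
  refine StrictMonoOn.strictConvexOn_of_deriv (convex_Icc 0 √2) ?_ ?_
  · exact fun r _ => (hasDerivAt_log_one_add_sq_div_two r).continuousAt.continuousWithinAt
  · rw [hderiv]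
    exact strictMonoOn_div_one_add_sq_div_two.mono interior_subset

theorem strictConvexOn_log_one_add_half_norm_sq {d : ℕ} :
    StrictConvexOn ℝ (Metric.ball (0 : EuclideanSpace ℝ (Fin d)) (Real.sqrt 2))
      (fun z : EuclideanSpace ℝ (Fin d) => Real.log (1 + ‖z‖ ^ 2 / 2)) := by
  have hnorm_mem : ∀ z ∈ Metric.ball (0 : EuclideanSpace ℝ (Fin d)) √2, ‖z‖ ∈ Icc 0 √2 :=
    fun z hz => ⟨norm_nonneg z, (mem_ball_zero_iff.1 hz).le⟩
  exact strictConvexOn_log_one_add_sq_div_two.comp_norm (convex_ball 0 √2) hnorm_mem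
    (strictMonoOn_log_one_add_sq_div_two.mono fun _ hr => hr.1)
end

section
/- For any unit vectors x, y in ℝ^d, the vector g = (x - y)/(2 - ⟨x,y⟩) satisfies ‖g‖ ≤ 1, and the map T(x) = x - g/(1 - ⟨x,g⟩) applied to this g returns a unit vector (namely y), i.e., the spherical OT map formula preserves the sphere whenever its gradient input arises from a cost gradient between sphere points. -/
open RealInnerProductSpace

/-!
With `s = ⟪x, y⟫`, one has `⟪x, x - y⟫ = 1 - s` for unit `x`, so `1 - ⟪x, g⟫ = (2 - s)⁻¹` and the
map undoes the scaling of `g`: `x - (2 - s) • g = x - (x - y) = y`. The bound on `g` is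
`‖x - y‖² = 2 - 2s ≤ (2 - s)²`.
-/

section

variable {E : Type*} [NormedAddCommGroup E] [InnerProductSpace ℝ E]

noncomputable def costGradient (x y : E) : E := (2 - ⟪x, y⟫)⁻¹ • (x - y)

noncomputable def sphericalMap (x g : E) : E := x - (1 - ⟪x, g⟫)⁻¹ • g

variable {x y : E}

theorem real_inner_le_one (hx : ‖x‖ = 1) (hy : ‖y‖ = 1) : ⟪x, y⟫ ≤ 1 := by
  simpa [hx, hy] using real_inner_le_norm x y

theorem norm_sub_le_two_sub_inner (hx : ‖x‖ = 1) (hy : ‖y‖ = 1) : ‖x - y‖ ≤ 2 - ⟪x, y⟫ := by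
  have hs := real_inner_le_one hx hy
  have hsq : ‖x - y‖ ^ 2 = 2 - 2 * ⟪x, y⟫ := by
    rw [norm_sub_sq_real, hx, hy]; ring
  refine (pow_le_pow_iff_left₀ (norm_nonneg _) (by linarith) two_ne_zero).mp ?_
  nlinarith [sq_nonneg ⟪x, y⟫]

theorem norm_costGradient_le_one (hx : ‖x‖ = 1) (hy : ‖y‖ = 1) : ‖costGradient x y‖ ≤ 1 := by
  have hsub := norm_sub_le_two_sub_inner hx hy
  have hpos : 0 < 2 - ⟪x, y⟫ := by linarith [real_inner_le_one hx hy]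
  rw [costGradient, norm_smul, norm_inv, Real.norm_of_nonneg hpos.le, inv_mul_le_iff₀ hpos,
    mul_one]
  exact hsub

theorem one_sub_inner_costGradient (hx : ‖x‖ = 1) (hxy : ⟪x, y⟫ ≠ 2) :
    1 - ⟪x, costGradient x y⟫ = (2 - ⟪x, y⟫)⁻¹ := by
  have hxx : ⟪x, x⟫ = 1 := by rw [real_inner_self_eq_norm_sq, hx, one_pow]
  have hne : 2 - ⟪x, y⟫ ≠ 0 := sub_ne_zero.mpr (Ne.symm hxy)
  rw [costGradient, real_inner_smul_right, inner_sub_right, hxx]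
  field_simp
  ring

theorem sphericalMap_costGradient (hx : ‖x‖ = 1) (hxy : ⟪x, y⟫ ≠ 2) :
    sphericalMap x (costGradient x y) = y := by
  have hne : 2 - ⟪x, y⟫ ≠ 0 := sub_ne_zero.mpr (Ne.symm hxy)
  rw [sphericalMap, one_sub_inner_costGradient hx hxy, costGradient, inv_inv, smul_smul,
    mul_inv_cancel₀ hne, one_smul, sub_sub_cancel]

end

theorem sot_map_preserves_sphere {d : ℕ}
    (x y : EuclideanSpace ℝ (Fin d)) (hx : ‖x‖ = 1) (hy : ‖y‖ = 1) :
    ‖(2 - ⟪x, y⟫)⁻¹ • (x - y)‖ ≤ 1 ∧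
    (let g := (2 - ⟪x, y⟫)⁻¹ • (x - y);
     x - (1 - ⟪x, g⟫)⁻¹ • g = y ∧ ‖x - (1 - ⟪x, g⟫)⁻¹ • g‖ = 1) := by
  have hxy : ⟪x, y⟫ ≠ 2 := ((real_inner_le_one hx hy).trans_lt one_lt_two).ne
  have hmap : sphericalMap x (costGradient x y) = y := sphericalMap_costGradient hx hxy
  exact ⟨norm_costGradient_le_one hx hy, hmap, (congrArg norm hmap).trans hy⟩
end

section
/- A function F : ℝ^n → ℝ built as an input-convex neural network — i.e., F(x) = w_L^T z_L where z_1 = σ(A_1 x + b_1) and z_{k+1} = σ(W_k z_k + A_k x + b_k) with all entries of the matrices W_k and of w_L nonnegative and σ a convex nondecreasing activation — is convex in x. -/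
/-! By induction on the depth, every coordinate of every hidden layer is convex in `x`: the
pre-activation `W_k z_k + A_{k+1} x + b_{k+1}` is a nonnegative combination of convex functions
plus an affine one, and composing with a convex nondecreasing `σ` preserves convexity. -/

open Matrix

/-- The hidden layers of an input-convex neural network:
`z₀ = σ(A₀ x + b₀)`, `z_{k+1} = σ(W_k z_k + A_{k+1} x + b_{k+1})`,
with `σ` applied componentwise. -/
noncomputable def icnnLayer (σ : ℝ → ℝ) (n m : ℕ)
    (W : ℕ → Matrix (Fin m) (Fin m) ℝ) (A : ℕ → Matrix (Fin m) (Fin n) ℝ)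
    (b : ℕ → Fin m → ℝ) : ℕ → (Fin n → ℝ) → (Fin m → ℝ)
  | 0, x => fun i => σ ((A 0).mulVec x i + b 0 i)
  | (k + 1), x => fun i =>
      σ ((W k).mulVec (icnnLayer σ n m W A b k x) i + (A (k + 1)).mulVec x i + b (k + 1) i)

open Set

section

variable {𝕜 E α β ι : Type*} [Semiring 𝕜] [PartialOrder 𝕜] [AddCommMonoid E] [SMul 𝕜 E]
  {s : Set E}

theorem ConvexOn.comp_of_monotone [AddCommMonoid α] [PartialOrder α] [SMul 𝕜 α]
    [AddCommMonoid β] [PartialOrder β] [SMul 𝕜 β] {f : E → β} {g : β → α}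
    (hg : ConvexOn 𝕜 univ g) (hf : ConvexOn 𝕜 s f) (hg' : Monotone g) :
    ConvexOn 𝕜 s (g ∘ f) :=
  ⟨hf.1, fun _ hx _ hy _ _ ha hb hab =>
    (hg' (hf.2 hx hy ha hb hab)).trans (hg.2 trivial trivial ha hb hab)⟩

theorem ConvexOn.finset_sum [AddCommMonoid β] [PartialOrder β] [IsOrderedAddMonoid β]
    [Module 𝕜 β] {t : Finset ι} {f : ι → E → β} (hs : Convex 𝕜 s)
    (hf : ∀ i ∈ t, ConvexOn 𝕜 s (f i)) : ConvexOn 𝕜 s (fun x => ∑ i ∈ t, f i x) := by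
  simp only [← Finset.sum_apply]
  exact Finset.sum_induction f (ConvexOn 𝕜 s) (fun _ _ => ConvexOn.add)
    (convexOn_const 0 hs) hf

end

theorem convexOn_mulVec_apply {𝕜 E ι κ : Type*} [CommSemiring 𝕜] [PartialOrder 𝕜]
    [IsOrderedRing 𝕜] [AddCommMonoid E] [SMul 𝕜 E] [Fintype κ] {s : Set E}
    {M : Matrix ι κ 𝕜} {i : ι} (hM : ∀ j, 0 ≤ M i j) {g : E → κ → 𝕜} (hs : Convex 𝕜 s)
    (hg : ∀ j, ConvexOn 𝕜 s (fun x => g x j)) : ConvexOn 𝕜 s (fun x => (M *ᵥ g x) i) :=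
  ConvexOn.finset_sum hs fun j _ => (hg j).smul (hM j)

theorem convexOn_icnnLayer {σ : ℝ → ℝ} (hσconv : ConvexOn ℝ univ σ) (hσmono : Monotone σ)
    {n m : ℕ} {W : ℕ → Matrix (Fin m) (Fin m) ℝ} {A : ℕ → Matrix (Fin m) (Fin n) ℝ}
    {b : ℕ → Fin m → ℝ} (hW : ∀ k i j, 0 ≤ W k i j) (k : ℕ) (i : Fin m) :
    ConvexOn ℝ univ (fun x => icnnLayer σ n m W A b k x i) := by
  have hA (l : ℕ) (j : Fin m) : ConvexOn ℝ univ (fun x => (A l *ᵥ x) j) :=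
    (LinearMap.proj j ∘ₗ (A l).mulVecLin).convexOn convex_univ
  induction k generalizing i with
  | zero => exact hσconv.comp_of_monotone ((hA 0 i).add_const (b 0 i)) hσmono
  | succ k ih =>
    have hpreactivation := ((convexOn_mulVec_apply (hW k i) convex_univ ih).add (hA (k + 1) i)).add_const
      (b (k + 1) i)
    exact hσconv.comp_of_monotone hpreactivation hσmono

/-- An input-convex neural network (nonnegative hidden-to-hidden weights `W`,
nonnegative output weights `w`, convex nondecreasing activation `σ`)
is a convex function of its input. -/
theorem icnn_is_convex (σ : ℝ → ℝ) (hσconv : ConvexOn ℝ Set.univ σ) (hσmono : Monotone σ)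
    (n m L : ℕ) (W : ℕ → Matrix (Fin m) (Fin m) ℝ) (A : ℕ → Matrix (Fin m) (Fin n) ℝ)
    (b : ℕ → Fin m → ℝ) (w : Fin m → ℝ)
    (hW : ∀ k i j, 0 ≤ W k i j) (hw : ∀ i, 0 ≤ w i) :
    ConvexOn ℝ Set.univ (fun x : Fin n → ℝ => ∑ i, w i * icnnLayer σ n m W A b L x i) :=
  ConvexOn.finset_sum convex_univ fun i _ =>
    (convexOn_icnnLayer hσconv hσmono hW L i).smul (hw i)
end
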